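/- arXiv:2605.13332 — 8 statements merged into one kernel-verified Lean document; each statement's English description precedes it below -/
import Mathlib

section
/- Let F=(A,R) be an argumentation framework and let a,b ∈ A be R-equivalent arguments in F. For any S ⊆ A with a ∈ S: S is conflict-free in F if and only if (S \ {a}) ∪ {b} is conflict-free in F. -/
/-- A set of arguments is conflict-free w.r.t. the attack relation `R`. -/
def ConflictFree {α : Type*} (R : α → α → Prop) (S : Finset α) : Prop :=
  ∀ x ∈ S, ∀ y ∈ S, ¬ R x y

/-- Two arguments `a` and `b` are `R`-equivalent in the AF `(A, R)` if they have
identical incoming and outgoing attacks. -/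
def REquiv {α : Type*} (A : Finset α) (R : α → α → Prop) (a b : α) : Prop :=
  ∀ c ∈ A, (R a c ↔ R b c) ∧ (R c a ↔ R c b)

/-- For `R`-equivalent arguments `a, b` of the AF `(A, R)` and any `S ⊆ A` with `a ∈ S`:
`S` is conflict-free iff `(S \ {a}) ∪ {b}` is conflict-free. -/
theorem stmt2 {α : Type*} [DecidableEq α] (A : Finset α) (R : α → α → Prop)
    (hR : ∀ x y, R x y → x ∈ A ∧ y ∈ A)
    (a b : α) (ha : a ∈ A) (hb : b ∈ A) (heq : REquiv A R a b)
    (S : Finset α) (hS : S ⊆ A) (haS : a ∈ S) :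
    ConflictFree R S ↔ ConflictFree R (insert b (S.erase a)) := by
  have key : ∀ x y, x ∈ A → y ∈ A →
      (R x y ↔ R ((fun c => if c = b then a else c) x) ((fun c => if c = b then a else c) y)) := by
    intro x y hx hy
    show R x y ↔ R (if x = b then a else x) (if y = b then a else y)
    split_ifs with h1 h2 h2
    · rw [h1, h2]
      exact ((heq b hb).1.symm).trans ((heq a ha).2.symm)
    · rw [h1]
      exact (heq y hy).1.symm
    · rw [h2]
      exact (heq x hx).2.symm
    · exact Iff.rfl
  constructor
  · intro h x hx y hy
    have hmx : (if x = b then a else x) ∈ S := by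
      split
      · exact haS
      · rcases Finset.mem_insert.1 hx with h' | h'
        · simp_all
        · exact Finset.mem_of_mem_erase h'
    have hmy : (if y = b then a else y) ∈ S := by
      split
      · exact haS
      · rcases Finset.mem_insert.1 hy with h' | h'
        · simp_all
        · exact Finset.mem_of_mem_erase h'
    have hxA : x ∈ A := by
      rcases Finset.mem_insert.1 hx with h' | h'
      · exact h' ▸ hb
      · exact hS (Finset.mem_of_mem_erase h')
    have hyA : y ∈ A := by
      rcases Finset.mem_insert.1 hy with h' | h'
      · exact h' ▸ hb
      · exact hS (Finset.mem_of_mem_erase h')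
    intro hxy
    exact h _ hmx _ hmy ((key x y hxA hyA).mp hxy)
  · intro h x hx y hy
    have hmx : (if x = a then b else x) ∈ insert b (S.erase a) := by
      split
      · exact Finset.mem_insert_self _ _
      · exact Finset.mem_insert_of_mem (Finset.mem_erase.2 ⟨by assumption, hx⟩)
    have hmy : (if y = a then b else y) ∈ insert b (S.erase a) := by
      split
      · exact Finset.mem_insert_self _ _
      · exact Finset.mem_insert_of_mem (Finset.mem_erase.2 ⟨by assumption, hy⟩)
    intro hxy
    apply h _ hmx _ hmy
    have hxA : x ∈ A := hS hx
    have hyA : y ∈ A := hS hy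
    split_ifs with h1 h2 h2
    · rw [h1, h2] at hxy
      exact (heq b hb).1.mp ((heq a ha).2.mp hxy)
    · rw [h1] at hxy
      exact (heq y hyA).1.mp hxy
    · rw [h2] at hxy
      exact (heq x hxA).2.mp hxy
    · exact hxy
end

section
/- Let F=(A,R) be an argumentation framework and let a,b ∈ A be R-equivalent arguments in F. For any S ⊆ A with a ∈ S: S is admissible in F if and only if (S \ {a}) ∪ {b} is admissible in F. -/
/-- An argument `x` is defended by `S` w.r.t. `R` if every attacker of `x`
is attacked by some element of `S`. -/
def Defended {α : Type*} (R : α → α → Prop) (S : Finset α) (x : α) : Prop :=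
  ∀ y, R y x → ∃ z ∈ S, R z y

/-- A set is admissible if it is conflict-free and defends all of its elements. -/
def Admissible {α : Type*} (R : α → α → Prop) (S : Finset α) : Prop :=
  ConflictFree R S ∧ ∀ x ∈ S, Defended R S x

private lemma no_self_attack {α : Type*} (A : Finset α) (R : α → α → Prop)
    (a b : α) (ha : a ∈ A) (hb : b ∈ A) (heq : REquiv A R a b)
    (hna : ¬ R a a) : ¬ R b b := fun h =>
  hna (((heq a ha).2).mpr (((heq b hb).1).mpr h))

/-- Adding a twin of a member preserves admissibility. -/
private lemma adm_insert_twin {α : Type*} [DecidableEq α] (A : Finset α) (R : α → α → Prop)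
    (hR : ∀ x y, R x y → x ∈ A ∧ y ∈ A)
    (a b : α) (ha : a ∈ A) (hb : b ∈ A) (heq : REquiv A R a b)
    (S : Finset α) (hS : S ⊆ A) (haS : a ∈ S) (hadm : Admissible R S) :
    Admissible R (insert b S) := by
  obtain ⟨hcf, hdef⟩ := hadm
  constructor
  · intro x hx y hy hxy
    rcases Finset.mem_insert.1 hx with hxb | hx
    · rw [hxb] at hxy
      rcases Finset.mem_insert.1 hy with hyb | hy
      · rw [hyb] at hxy
        exact no_self_attack A R a b ha hb heq (hcf a haS a haS) hxy
      · exact hcf a haS y hy (((heq y (hS hy)).1).mpr hxy)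
    · rcases Finset.mem_insert.1 hy with hyb | hy
      · rw [hyb] at hxy
        exact hcf x hx a haS (((heq x (hS hx)).2).mpr hxy)
      · exact hcf x hx y hy hxy
  · intro x hx y hyx
    have hyA : y ∈ A := (hR y x hyx).1
    rcases Finset.mem_insert.1 hx with hxb | hx
    · rw [hxb] at hyx
      obtain ⟨z, hz, hzy⟩ := hdef a haS y (((heq y hyA).2).mpr hyx)
      exact ⟨z, Finset.mem_insert_of_mem hz, hzy⟩
    · obtain ⟨z, hz, hzy⟩ := hdef x hx y hyx
      exact ⟨z, Finset.mem_insert_of_mem hz, hzy⟩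

/-- Replacing a member by a twin preserves admissibility. -/
private lemma adm_swap {α : Type*} [DecidableEq α] (A : Finset α) (R : α → α → Prop)
    (hR : ∀ x y, R x y → x ∈ A ∧ y ∈ A)
    (a b : α) (ha : a ∈ A) (hb : b ∈ A) (heq : REquiv A R a b)
    (S : Finset α) (hS : S ⊆ A) (haS : a ∈ S) (hadm : Admissible R S) :
    Admissible R (insert b (S.erase a)) := by
  obtain ⟨hcf, hdef⟩ := hadm
  constructor
  · intro x hx y hy hxy
    rcases Finset.mem_insert.1 hx with hxb | hx
    · rw [hxb] at hxy
      rcases Finset.mem_insert.1 hy with hyb | hy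
      · rw [hyb] at hxy
        exact no_self_attack A R a b ha hb heq (hcf a haS a haS) hxy
      · have hyS := Finset.mem_of_mem_erase hy
        exact hcf a haS y hyS (((heq y (hS hyS)).1).mpr hxy)
    · have hxS := Finset.mem_of_mem_erase hx
      rcases Finset.mem_insert.1 hy with hyb | hy
      · rw [hyb] at hxy
        exact hcf x hxS a haS (((heq x (hS hxS)).2).mpr hxy)
      · exact hcf x hxS y (Finset.mem_of_mem_erase hy) hxy
  · intro x hx y hyx
    have hyA : y ∈ A := (hR y x hyx).1
    have key : ∀ z ∈ S, R z y → ∃ w ∈ insert b (S.erase a), R w y := by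
      intro z hz hzy
      by_cases hza : z = a
      · exact ⟨b, Finset.mem_insert_self _ _, ((heq y hyA).1).mp (hza ▸ hzy)⟩
      · exact ⟨z, Finset.mem_insert_of_mem (Finset.mem_erase.2 ⟨hza, hz⟩), hzy⟩
    rcases Finset.mem_insert.1 hx with hxb | hx
    · rw [hxb] at hyx
      obtain ⟨z, hz, hzy⟩ := hdef a haS y (((heq y hyA).2).mpr hyx)
      exact key z hz hzy
    · obtain ⟨z, hz, hzy⟩ := hdef x (Finset.mem_of_mem_erase hx) y hyx
      exact key z hz hzy

/-- For `R`-equivalent arguments `a, b` of the AF `(A, R)` and any `S ⊆ A` with `a ∈ S`: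
`S` is admissible iff `(S \ {a}) ∪ {b}` is admissible. -/
theorem stmt3 {α : Type*} [DecidableEq α] (A : Finset α) (R : α → α → Prop)
    (hR : ∀ x y, R x y → x ∈ A ∧ y ∈ A)
    (a b : α) (ha : a ∈ A) (hb : b ∈ A) (heq : REquiv A R a b)
    (S : Finset α) (hS : S ⊆ A) (haS : a ∈ S) :
    Admissible R S ↔ Admissible R (insert b (S.erase a)) := by
  have heq' : REquiv A R b a := fun c hc => ⟨(heq c hc).1.symm, (heq c hc).2.symm⟩
  by_cases hab : a = b
  · subst hab
    rw [Finset.insert_erase haS]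
  constructor
  · exact adm_swap A R hR a b ha hb heq S hS haS
  · intro h
    set T := insert b (S.erase a) with hT
    have hTA : T ⊆ A := by
      intro x hx
      rcases Finset.mem_insert.1 hx with hxb | hx
      · rw [hxb]; exact hb
      · exact hS (Finset.mem_of_mem_erase hx)
    have hbT : b ∈ T := Finset.mem_insert_self _ _
    have h2 := adm_swap A R hR b a hb ha heq' T hTA hbT h
    have hEq : insert a (T.erase b) = S.erase b := by
      rw [hT, Finset.erase_insert_eq_erase, Finset.erase_right_comm,
        Finset.insert_erase (Finset.mem_erase.2 ⟨hab, haS⟩)]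
    rw [hEq] at h2
    by_cases hbS : b ∈ S
    · have h3 := adm_insert_twin A R hR a b ha hb heq (S.erase b)
        (fun x hx => hS (Finset.mem_of_mem_erase hx))
        (Finset.mem_erase.2 ⟨hab, haS⟩) h2
      rwa [Finset.insert_erase hbS] at h3
    · rwa [Finset.erase_eq_of_notMem hbS] at h2
end

section
/- Let F₁=(A₁,R₁) and F₂=(A₂,R₂) be argumentation frameworks with A₁ ∩ A₂ = ∅, and let F=(A₁∪A₂, R₁∪R₂) be their disjoint union. For all S₁ ⊆ A₁ and S₂ ⊆ A₂: S₁ ∪ S₂ is preferred in F if and only if S₁ is preferred in F₁ and S₂ is preferred in F₂. -/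
/-- A set `S ⊆ A` is preferred in the AF `(A, R)` if it is admissible and no proper
superset of it inside `A` is admissible. -/
def Preferred {α : Type*} (A : Finset α) (R : α → α → Prop) (S : Finset α) : Prop :=
  S ⊆ A ∧ Admissible R S ∧ ∀ S' ⊆ A, S ⊂ S' → ¬ Admissible R S'

lemma adm_union {α : Type*} [DecidableEq α]
    (A₁ A₂ : Finset α) (R₁ R₂ : α → α → Prop)
    (hdisj : Disjoint A₁ A₂)
    (hR₁ : ∀ x y, R₁ x y → x ∈ A₁ ∧ y ∈ A₁)
    (hR₂ : ∀ x y, R₂ x y → x ∈ A₂ ∧ y ∈ A₂)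
    (T₁ T₂ : Finset α) (hT₁ : T₁ ⊆ A₁) (hT₂ : T₂ ⊆ A₂) :
    Admissible (fun x y => R₁ x y ∨ R₂ x y) (T₁ ∪ T₂) ↔
      Admissible R₁ T₁ ∧ Admissible R₂ T₂ := by
  have hdis : ∀ a, a ∈ A₁ → a ∈ A₂ → False := fun a h1 h2 =>
    Finset.disjoint_left.mp hdisj h1 h2
  constructor
  · rintro ⟨hcf, hdef⟩
    refine ⟨⟨fun x hx y hy hr => hcf x (Finset.mem_union_left _ hx) y
        (Finset.mem_union_left _ hy) (Or.inl hr), ?_⟩,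
      ⟨fun x hx y hy hr => hcf x (Finset.mem_union_right _ hx) y
        (Finset.mem_union_right _ hy) (Or.inr hr), ?_⟩⟩
    · intro x hx y hr
      obtain ⟨z, hz, hz'⟩ := hdef x (Finset.mem_union_left _ hx) y (Or.inl hr)
      rcases Finset.mem_union.mp hz with hz1 | hz2
      · rcases hz' with h | h
        · exact ⟨z, hz1, h⟩
        · exact absurd (hR₂ z y h).2 (fun hy2 => hdis y (hR₁ y x hr).1 hy2)
      · rcases hz' with h | h
        · exact absurd (hR₁ z y h).1 (fun hz1 => hdis z hz1 (hT₂ hz2))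
        · exact absurd (hR₂ z y h).2 (fun hy2 => hdis y (hR₁ y x hr).1 hy2)
    · intro x hx y hr
      obtain ⟨z, hz, hz'⟩ := hdef x (Finset.mem_union_right _ hx) y (Or.inr hr)
      rcases Finset.mem_union.mp hz with hz1 | hz2
      · rcases hz' with h | h
        · exact absurd (hR₁ z y h).2 (fun hy1 => hdis y hy1 (hR₂ y x hr).1)
        · exact absurd (hR₂ z y h).1 (fun hz2 => hdis z (hT₁ hz1) hz2)
      · rcases hz' with h | h
        · exact absurd (hR₁ z y h).2 (fun hy1 => hdis y hy1 (hR₂ y x hr).1)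
        · exact ⟨z, hz2, h⟩
  · rintro ⟨⟨hcf1, hdef1⟩, ⟨hcf2, hdef2⟩⟩
    constructor
    · intro x hx y hy hr
      rcases Finset.mem_union.mp hx with hx1 | hx2 <;>
        rcases Finset.mem_union.mp hy with hy1 | hy2 <;>
        rcases hr with h | h
      · exact hcf1 x hx1 y hy1 h
      · exact hdis x (hT₁ hx1) (hR₂ x y h).1
      · exact hdis y (hR₁ x y h).2 (hT₂ hy2)
      · exact hdis x (hT₁ hx1) (hR₂ x y h).1
      · exact hdis x (hR₁ x y h).1 (hT₂ hx2)
      · exact hdis y (hT₁ hy1) (hR₂ x y h).2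
      · exact hdis x (hR₁ x y h).1 (hT₂ hx2)
      · exact hcf2 x hx2 y hy2 h
    · intro x hx y hr
      rcases Finset.mem_union.mp hx with hx1 | hx2
      · rcases hr with h | h
        · obtain ⟨z, hz, hz'⟩ := hdef1 x hx1 y h
          exact ⟨z, Finset.mem_union_left _ hz, Or.inl hz'⟩
        · exact absurd (hR₂ y x h).2 (fun h2 => hdis x (hT₁ hx1) h2)
      · rcases hr with h | h
        · exact absurd (hR₁ y x h).2 (fun h1 => hdis x h1 (hT₂ hx2))
        · obtain ⟨z, hz, hz'⟩ := hdef2 x hx2 y h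
          exact ⟨z, Finset.mem_union_right _ hz, Or.inr hz'⟩

/-- For disjoint AFs `F₁ = (A₁,R₁)` and `F₂ = (A₂,R₂)` and their disjoint union
`F = (A₁ ∪ A₂, R₁ ∪ R₂)`: for all `S₁ ⊆ A₁`, `S₂ ⊆ A₂`, the set `S₁ ∪ S₂` is
preferred in `F` iff `S₁` is preferred in `F₁` and `S₂` is preferred in `F₂`. -/
theorem stmt8 {α : Type*} [DecidableEq α]
    (A₁ A₂ : Finset α) (R₁ R₂ : α → α → Prop)
    (hdisj : Disjoint A₁ A₂)
    (hR₁ : ∀ x y, R₁ x y → x ∈ A₁ ∧ y ∈ A₁)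
    (hR₂ : ∀ x y, R₂ x y → x ∈ A₂ ∧ y ∈ A₂)
    (S₁ S₂ : Finset α) (hS₁ : S₁ ⊆ A₁) (hS₂ : S₂ ⊆ A₂) :
    Preferred (A₁ ∪ A₂) (fun x y => R₁ x y ∨ R₂ x y) (S₁ ∪ S₂) ↔
      Preferred A₁ R₁ S₁ ∧ Preferred A₂ R₂ S₂ := by
  have hdis : ∀ a, a ∈ A₁ → a ∈ A₂ → False := fun a h1 h2 =>
    Finset.disjoint_left.mp hdisj h1 h2
  have key := adm_union A₁ A₂ R₁ R₂ hdisj hR₁ hR₂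
  constructor
  · rintro ⟨hsub, hadm, hmax⟩
    obtain ⟨ha1, ha2⟩ := (key S₁ S₂ hS₁ hS₂).mp hadm
    refine ⟨⟨hS₁, ha1, ?_⟩, ⟨hS₂, ha2, ?_⟩⟩
    · intro S' hS' hss hadm'
      refine hmax (S' ∪ S₂) (Finset.union_subset_union hS' hS₂) ?_
        ((key S' S₂ hS' hS₂).mpr ⟨hadm', ha2⟩)
      refine ⟨Finset.union_subset_union hss.subset le_rfl, ?_⟩
      intro hc
      obtain ⟨x, hx', hx⟩ := Finset.exists_of_ssubset hss
      rcases Finset.mem_union.mp (hc (Finset.mem_union_left _ hx')) with h | h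
      · exact hx h
      · exact hdis x (hS' hx') (hS₂ h)
    · intro S' hS' hss hadm'
      refine hmax (S₁ ∪ S') (Finset.union_subset_union hS₁ hS') ?_
        ((key S₁ S' hS₁ hS').mpr ⟨ha1, hadm'⟩)
      refine ⟨Finset.union_subset_union le_rfl hss.subset, ?_⟩
      intro hc
      obtain ⟨x, hx', hx⟩ := Finset.exists_of_ssubset hss
      rcases Finset.mem_union.mp (hc (Finset.mem_union_right _ hx')) with h | h
      · exact hdis x (hS₁ h) (hS' hx')
      · exact hx h
  · rintro ⟨⟨_, ha1, hmax1⟩, ⟨_, ha2, hmax2⟩⟩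
    refine ⟨Finset.union_subset_union hS₁ hS₂, (key S₁ S₂ hS₁ hS₂).mpr ⟨ha1, ha2⟩, ?_⟩
    intro S' hS' hss hadm'
    set T₁ := S' ∩ A₁ with hT₁def
    set T₂ := S' ∩ A₂ with hT₂def
    have hT₁ : T₁ ⊆ A₁ := Finset.inter_subset_right
    have hT₂ : T₂ ⊆ A₂ := Finset.inter_subset_right
    have hsplit : S' = T₁ ∪ T₂ := by
      ext x
      simp only [hT₁def, hT₂def, Finset.mem_union, Finset.mem_inter]
      constructor
      · intro hx
        rcases Finset.mem_union.mp (hS' hx) with h | h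
        · exact Or.inl ⟨hx, h⟩
        · exact Or.inr ⟨hx, h⟩
      · rintro (⟨h, _⟩ | ⟨h, _⟩) <;> exact h
    rw [hsplit] at hadm'
    obtain ⟨hb1, hb2⟩ := (key T₁ T₂ hT₁ hT₂).mp hadm'
    have hsub1 : S₁ ⊆ T₁ := fun x hx =>
      Finset.mem_inter.mpr ⟨hss.subset (Finset.mem_union_left _ hx), hS₁ hx⟩
    have hsub2 : S₂ ⊆ T₂ := fun x hx =>
      Finset.mem_inter.mpr ⟨hss.subset (Finset.mem_union_right _ hx), hS₂ hx⟩
    obtain ⟨x, hx', hx⟩ := Finset.exists_of_ssubset hss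
    rw [hsplit] at hx'
    rcases Finset.mem_union.mp hx' with h | h
    · exact hmax1 T₁ hT₁ ⟨hsub1, fun hc => hx (Finset.mem_union_left _ (hc h))⟩ hb1
    · exact hmax2 T₂ hT₂ ⟨hsub2, fun hc => hx (Finset.mem_union_right _ (hc h))⟩ hb2
end

section
/- Let F₁=(A₁,R₁) and F₂=(A₂,R₂) be argumentation frameworks with A₁ ∩ A₂ = ∅, and let F=(A₁∪A₂, R₁∪R₂) be their disjoint union. For all S₁ ⊆ A₁ and S₂ ⊆ A₂: S₁ ∪ S₂ is a stage extension of F if and only if S₁ is a stage extension of F₁ and S₂ is a stage extension of F₂. -/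
/-- The range `E⁺_R` of a set of arguments: the set together with everything it attacks. -/
def RangeSet {α : Type*} (R : α → α → Prop) (S : Finset α) : Set α :=
  ↑S ∪ {x | ∃ s ∈ S, R s x}

/-- A set `S ⊆ A` is a stage extension of the AF `(A, R)` if it is conflict-free and
no conflict-free set `S' ⊆ A` has strictly larger range. -/
def Stage {α : Type*} (A : Finset α) (R : α → α → Prop) (S : Finset α) : Prop :=
  S ⊆ A ∧ ConflictFree R S ∧
    ∀ S' ⊆ A, ConflictFree R S' → ¬ RangeSet R S ⊂ RangeSet R S'

section aux
variable {α : Type*} [DecidableEq α] {A₁ A₂ : Finset α} {R₁ R₂ : α → α → Prop}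

lemma range_sub (hR : ∀ x y, R₁ x y → x ∈ A₁ ∧ y ∈ A₁) {S : Finset α} (hS : S ⊆ A₁) :
    RangeSet R₁ S ⊆ (A₁ : Set α) := by
  rintro x (hx | ⟨s, hs, hr⟩)
  · exact hS hx
  · exact (hR _ _ hr).2

lemma range_union (hdisj : Disjoint A₁ A₂)
    (hR₁ : ∀ x y, R₁ x y → x ∈ A₁ ∧ y ∈ A₁)
    (hR₂ : ∀ x y, R₂ x y → x ∈ A₂ ∧ y ∈ A₂)
    {S₁ S₂ : Finset α} (hS₁ : S₁ ⊆ A₁) (hS₂ : S₂ ⊆ A₂) :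
    RangeSet (fun x y => R₁ x y ∨ R₂ x y) (S₁ ∪ S₂) = RangeSet R₁ S₁ ∪ RangeSet R₂ S₂ := by
  ext x
  constructor
  · rintro (hx | ⟨s, hs, hr | hr⟩)
    · rw [Finset.coe_union] at hx
      rcases hx with hx | hx
      · exact Or.inl (Or.inl hx)
      · exact Or.inr (Or.inl hx)
    · refine Or.inl (Or.inr ⟨s, ?_, hr⟩)
      rcases Finset.mem_union.1 hs with h | h
      · exact h
      · exact absurd (hR₁ _ _ hr).1 (fun hh => Finset.disjoint_left.1 hdisj hh (hS₂ h))
    · refine Or.inr (Or.inr ⟨s, ?_, hr⟩)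
      rcases Finset.mem_union.1 hs with h | h
      · exact absurd (hR₂ _ _ hr).1 (fun hh => Finset.disjoint_left.1 hdisj (hS₁ h) hh)
      · exact h
  · rintro ((hx | ⟨s, hs, hr⟩) | (hx | ⟨s, hs, hr⟩))
    · exact Or.inl (by simp [hx])
    · exact Or.inr ⟨s, Finset.mem_union_left _ hs, Or.inl hr⟩
    · exact Or.inl (by simp [hx])
    · exact Or.inr ⟨s, Finset.mem_union_right _ hs, Or.inr hr⟩

lemma cf_union (hdisj : Disjoint A₁ A₂)
    (hR₁ : ∀ x y, R₁ x y → x ∈ A₁ ∧ y ∈ A₁)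
    (hR₂ : ∀ x y, R₂ x y → x ∈ A₂ ∧ y ∈ A₂)
    {S₁ S₂ : Finset α} (hS₁ : S₁ ⊆ A₁) (hS₂ : S₂ ⊆ A₂) :
    ConflictFree (fun x y => R₁ x y ∨ R₂ x y) (S₁ ∪ S₂) ↔
      ConflictFree R₁ S₁ ∧ ConflictFree R₂ S₂ := by
  constructor
  · intro h
    exact ⟨fun x hx y hy hr => h x (Finset.mem_union_left _ hx) y (Finset.mem_union_left _ hy)
        (Or.inl hr),
      fun x hx y hy hr => h x (Finset.mem_union_right _ hx) y (Finset.mem_union_right _ hy)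
        (Or.inr hr)⟩
  · rintro ⟨h₁, h₂⟩ x hx y hy (hr | hr)
    · have hx1 : x ∈ S₁ := by
        rcases Finset.mem_union.1 hx with h | h
        · exact h
        · exact absurd (hR₁ _ _ hr).1 (fun hh => Finset.disjoint_left.1 hdisj hh (hS₂ h))
      have hy1 : y ∈ S₁ := by
        rcases Finset.mem_union.1 hy with h | h
        · exact h
        · exact absurd (hR₁ _ _ hr).2 (fun hh => Finset.disjoint_left.1 hdisj hh (hS₂ h))
      exact h₁ x hx1 y hy1 hr
    · have hx1 : x ∈ S₂ := by
        rcases Finset.mem_union.1 hx with h | h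
        · exact absurd (hR₂ _ _ hr).1 (fun hh => Finset.disjoint_left.1 hdisj (hS₁ h) hh)
        · exact h
      have hy1 : y ∈ S₂ := by
        rcases Finset.mem_union.1 hy with h | h
        · exact absurd (hR₂ _ _ hr).2 (fun hh => Finset.disjoint_left.1 hdisj (hS₁ h) hh)
        · exact h
      exact h₂ x hx1 y hy1 hr

lemma ssub_union {X₁ X₂ Y₁ Y₂ : Set α} (hdisj : Disjoint A₁ A₂)
    (hX₁ : X₁ ⊆ A₁) (hX₂ : X₂ ⊆ A₂) (hY₁ : Y₁ ⊆ A₁) (hY₂ : Y₂ ⊆ A₂)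
    (h : X₁ ∪ X₂ ⊂ Y₁ ∪ Y₂) : X₁ ⊂ Y₁ ∨ X₂ ⊂ Y₂ := by
  have hd : Disjoint (A₁ : Set α) (A₂ : Set α) := by
    exact_mod_cast Finset.disjoint_coe.2 hdisj
  have s₁ : X₁ ⊆ Y₁ := by
    intro x hx
    rcases h.1 (Or.inl hx) with h' | h'
    · exact h'
    · exact absurd (hX₁ hx) (fun hh => hd.le_bot ⟨hh, hY₂ h'⟩)
  have s₂ : X₂ ⊆ Y₂ := by
    intro x hx
    rcases h.1 (Or.inr hx) with h' | h'
    · exact absurd (hX₂ hx) (fun hh => hd.le_bot ⟨hY₁ h', hh⟩)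
    · exact h'
  obtain ⟨x, hxY, hxX⟩ := Set.exists_of_ssubset h
  rcases hxY with hx | hx
  · exact Or.inl ⟨s₁, fun hsub => hxX (Or.inl (hsub hx))⟩
  · exact Or.inr ⟨s₂, fun hsub => hxX (Or.inr (hsub hx))⟩
end aux

section aux2
variable {α : Type*} {A₁ A₂ : Finset α}

lemma ssub_union_left {X Y Z : Set α} (hdisj : Disjoint A₁ A₂)
    (hY : Y ⊆ A₁) (hZ : Z ⊆ A₂) (h : X ⊂ Y) : X ∪ Z ⊂ Y ∪ Z := by
  refine ⟨Set.union_subset_union_left _ h.1, fun hsub => h.2 fun y hy => ?_⟩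
  rcases hsub (Or.inl hy) with h' | h'
  · exact h'
  · exact absurd (hY hy) (fun hh => Finset.disjoint_left.1 hdisj hh (hZ h'))

lemma ssub_union_right {X Y Z : Set α} (hdisj : Disjoint A₁ A₂)
    (hY : Y ⊆ A₂) (hZ : Z ⊆ A₁) (h : X ⊂ Y) : Z ∪ X ⊂ Z ∪ Y := by
  refine ⟨Set.union_subset_union_right _ h.1, fun hsub => h.2 fun y hy => ?_⟩
  rcases hsub (Or.inr hy) with h' | h'
  · exact absurd (hY hy) (fun hh => Finset.disjoint_left.1 hdisj (hZ h') hh)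
  · exact h'
end aux2

/-- For disjoint AFs `F₁ = (A₁,R₁)` and `F₂ = (A₂,R₂)` and their disjoint union
`F = (A₁ ∪ A₂, R₁ ∪ R₂)`: for all `S₁ ⊆ A₁`, `S₂ ⊆ A₂`, the set `S₁ ∪ S₂` is
a stage extension of `F` iff `S₁` is a stage extension of `F₁` and `S₂` is a
stage extension of `F₂`. -/
theorem stmt12 {α : Type*} [DecidableEq α]
    (A₁ A₂ : Finset α) (R₁ R₂ : α → α → Prop)
    (hdisj : Disjoint A₁ A₂)
    (hR₁ : ∀ x y, R₁ x y → x ∈ A₁ ∧ y ∈ A₁)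
    (hR₂ : ∀ x y, R₂ x y → x ∈ A₂ ∧ y ∈ A₂)
    (S₁ S₂ : Finset α) (hS₁ : S₁ ⊆ A₁) (hS₂ : S₂ ⊆ A₂) :
    Stage (A₁ ∪ A₂) (fun x y => R₁ x y ∨ R₂ x y) (S₁ ∪ S₂) ↔
      Stage A₁ R₁ S₁ ∧ Stage A₂ R₂ S₂ := by
  constructor
  · rintro ⟨hsub, hcf, hmax⟩
    obtain ⟨cf₁, cf₂⟩ := (cf_union hdisj hR₁ hR₂ hS₁ hS₂).1 hcf
    refine ⟨⟨hS₁, cf₁, ?_⟩, ⟨hS₂, cf₂, ?_⟩⟩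
    · intro S' hS' cf' hss
      refine hmax (S' ∪ S₂) (Finset.union_subset_union hS' hS₂)
        ((cf_union hdisj hR₁ hR₂ hS' hS₂).2 ⟨cf', cf₂⟩) ?_
      rw [range_union hdisj hR₁ hR₂ hS₁ hS₂, range_union hdisj hR₁ hR₂ hS' hS₂]
      exact ssub_union_left hdisj (range_sub hR₁ hS') (range_sub hR₂ hS₂) hss
    · intro S' hS' cf' hss
      refine hmax (S₁ ∪ S') (Finset.union_subset_union hS₁ hS')
        ((cf_union hdisj hR₁ hR₂ hS₁ hS').2 ⟨cf₁, cf'⟩) ?_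
      rw [range_union hdisj hR₁ hR₂ hS₁ hS₂, range_union hdisj hR₁ hR₂ hS₁ hS']
      exact ssub_union_right hdisj (range_sub hR₂ hS') (range_sub hR₁ hS₁) hss
  · rintro ⟨⟨_, cf₁, max₁⟩, ⟨_, cf₂, max₂⟩⟩
    refine ⟨Finset.union_subset_union hS₁ hS₂,
      (cf_union hdisj hR₁ hR₂ hS₁ hS₂).2 ⟨cf₁, cf₂⟩, ?_⟩
    intro S' hS' cf' hss
    have hTeq : S' ∩ A₁ ∪ S' ∩ A₂ = S' := by
      rw [← Finset.inter_union_distrib_left, Finset.inter_eq_left.2 hS']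
    have hT₁ : S' ∩ A₁ ⊆ A₁ := Finset.inter_subset_right
    have hT₂ : S' ∩ A₂ ⊆ A₂ := Finset.inter_subset_right
    rw [← hTeq] at cf'
    obtain ⟨cfT₁, cfT₂⟩ := (cf_union hdisj hR₁ hR₂ hT₁ hT₂).1 cf'
    rw [range_union hdisj hR₁ hR₂ hS₁ hS₂, ← hTeq,
      range_union hdisj hR₁ hR₂ hT₁ hT₂] at hss
    rcases ssub_union hdisj (range_sub hR₁ hS₁) (range_sub hR₂ hS₂)
        (range_sub hR₁ hT₁) (range_sub hR₂ hT₂) hss with h | h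
    · exact max₁ _ hT₁ cfT₁ h
    · exact max₂ _ hT₂ cfT₂ h
end

section
/- Let φ = C₁ ∧ ⋯ ∧ C_m be a 3-CNF formula over variables X, where C_i = (ℓ_{i1} ∨ ℓ_{i2} ∨ ℓ_{i3}), and let F=(A,R) be the AF with A = {ℓ_{ij} | 1 ≤ i ≤ m, 1 ≤ j ≤ 3} ∪ {a,b} (one argument per literal occurrence plus two fresh arguments a,b) and R consisting of the symmetric attacks {ℓ_{i1},ℓ_{i2}}, {ℓ_{i2},ℓ_{i3}}, {ℓ_{i3},ℓ_{i1}} for each i ≤ m, the symmetric attacks {ℓ,ℓ'} between every pair of occurrences of complementary literals (ℓ = x, ℓ' = ¬x for some x ∈ X), the symmetric attack {a,b}, and symmetric attacks {b,x} for every x ∈ A \ {b}. Then there exist naive extensions S,T of F with a ∈ S, b ∈ T and d(S,T) = m+2 if and only if φ is satisfiable. -/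
/-!
The argument `b` attacks every other argument, so `{b}` is the only naive extension containing
`b`, and a naive `S ∋ a` lies at distance `|S| + 1` from it. Hence `d(S, {b}) = m + 2` says that
`S` contains `m` literal occurrences; the clause triangles allow at most one per clause, so `S`
picks one occurrence in every clause, and the attacks between complementary occurrences make
these picks a consistent, hence satisfiable, set of literals. Conversely, one true literal per
clause of a satisfying assignment, together with `a`, is a naive extension.
-/

open scoped symmDiff

/-- A set is naive (w.r.t. an AF whose set of arguments is the whole type) if it is
conflict-free and no proper superset of it is conflict-free. -/
def Naive {α : Type*} (R : α → α → Prop) (S : Finset α) : Prop :=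
  ConflictFree R S ∧ ∀ S' : Finset α, S ⊂ S' → ¬ ConflictFree R S'

/-- Arguments of the reduction AF for a 3-CNF with `m` clauses: one argument per
literal occurrence `(i,j)` (the `j`-th literal of clause `i`), plus the two fresh
arguments `a = Sum.inr false` and `b = Sum.inr true`. -/
abbrev Arg (m : ℕ) : Type := (Fin m × Fin 3) ⊕ Bool

/-- The (symmetric) attack relation of the reduction AF for a 3-CNF with `m` clauses,
whose `j`-th literal of clause `i` is `ℓ i j` (a variable together with a polarity):
a triangle of attacks between the three literal occurrences of each clause, attacks
between every pair of occurrences of complementary literals, an attack between `a`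
and `b`, and attacks between `b` and every other argument. -/
def cnfAttack {X : Type*} [DecidableEq X] {m : ℕ} (ℓ : Fin m → Fin 3 → X × Bool) :
    Arg m → Arg m → Prop
  | Sum.inl p, Sum.inl q =>
      (p.1 = q.1 ∧ p.2 ≠ q.2) ∨
      ((ℓ p.1 p.2).1 = (ℓ q.1 q.2).1 ∧ (ℓ p.1 p.2).2 ≠ (ℓ q.1 q.2).2)
  | Sum.inl _, Sum.inr c => c = true
  | Sum.inr c, Sum.inl _ => c = true
  | Sum.inr c, Sum.inr c' => c ≠ c'

open Finset

section General

variable {α : Type*} {R : α → α → Prop}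

lemma ConflictFree.eq_singleton_of_attacks {S : Finset α} {x : α} (hS : ConflictFree R S)
    (hx : x ∈ S) (hattack : ∀ y, y ≠ x → R x y) : S = {x} :=
  eq_singleton_iff_unique_mem.mpr
    ⟨hx, fun y hy => by_contra fun hne => hS x hx y hy (hattack y hne)⟩

lemma naive_of_forall_notMem {S : Finset α} (hS : ConflictFree R S)
    (hmax : ∀ x ∉ S, ∃ y ∈ S, R y x) : Naive R S := by
  refine ⟨hS, fun S' hSS' hS' => ?_⟩
  obtain ⟨x, hxS', hxS⟩ := exists_of_ssubset hSS'
  obtain ⟨y, hyS, hyx⟩ := hmax x hxS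
  exact hS' y (hSS'.subset hyS) x hxS' hyx

lemma naive_singleton {x : α} (hx : ¬ R x x) (hattack : ∀ y, y ≠ x → R x y) : Naive R {x} :=
  naive_of_forall_notMem (by simpa [ConflictFree] using hx)
    fun y hy => ⟨x, mem_singleton_self x, hattack y (by simpa using hy)⟩

lemma card_symmDiff_singleton [DecidableEq α] {S : Finset α} {x : α} (hx : x ∉ S) :
    (S ∆ {x}).card = S.card + 1 := by
  have hdisj : Disjoint S {x} := disjoint_singleton_right.mpr hx
  rw [hdisj.symmDiff_eq_sup, sup_eq_union, card_union_of_disjoint hdisj, card_singleton]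

lemma exists_assignment_of_consistent {ι X : Type*} (lit : ι → X × Bool)
    (hcons : ∀ i k, (lit i).1 = (lit k).1 → (lit i).2 = (lit k).2) :
    ∃ τ : X → Bool, ∀ i, τ (lit i).1 = (lit i).2 := by
  classical
  refine ⟨fun x => if h : ∃ i, (lit i).1 = x then (lit h.choose).2 else false, fun i => ?_⟩
  have h : ∃ k, (lit k).1 = (lit i).1 := ⟨i, rfl⟩
  exact (dif_pos h).trans (hcons _ _ h.choose_spec)

end General

section Reduction

variable {X : Type*} [DecidableEq X] {m : ℕ} (ℓ : Fin m → Fin 3 → X × Bool)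

lemma cnfAttack_inr_true (x : Arg m) (hx : x ≠ Sum.inr true) :
    cnfAttack ℓ (Sum.inr true) x := by
  rcases x with p | (_ | _)
  · rfl
  · exact Bool.noConfusion
  · exact absurd rfl hx

lemma cnfAttack_inr_false_inr_true : cnfAttack ℓ (Sum.inr false) (Sum.inr true) :=
  Bool.false_ne_true

lemma not_cnfAttack_inr_self (c : Bool) : ¬ cnfAttack ℓ (Sum.inr c) (Sum.inr c) :=
  fun h => h rfl

variable {ℓ}

lemma ConflictFree.injOn_clause {S : Finset (Arg m)} (hS : ConflictFree (cnfAttack ℓ) S) :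
    Set.InjOn Prod.fst (S.toLeft : Set (Fin m × Fin 3)) := by
  intro p hp q hq hclause
  by_contra hne
  exact hS _ (mem_toLeft.mp hp) _ (mem_toLeft.mp hq)
    (Or.inl ⟨hclause, fun hpos => hne (Prod.ext hclause hpos)⟩)

lemma ConflictFree.sign_eq_of_var_eq {S : Finset (Arg m)} (hS : ConflictFree (cnfAttack ℓ) S)
    {p q : Fin m × Fin 3} (hp : Sum.inl p ∈ S) (hq : Sum.inl q ∈ S)
    (hvar : (ℓ p.1 p.2).1 = (ℓ q.1 q.2).1) : (ℓ p.1 p.2).2 = (ℓ q.1 q.2).2 :=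
  by_contra fun hsign => hS _ hp _ hq (Or.inr ⟨hvar, hsign⟩)

lemma exists_assignment_of_conflictFree {S : Finset (Arg m)}
    (hS : ConflictFree (cnfAttack ℓ) S) (ha : Sum.inr false ∈ S) (hb : Sum.inr true ∉ S)
    (hcard : S.card = m + 1) :
    ∃ τ : X → Bool, ∀ i : Fin m, ∃ j : Fin 3, τ (ℓ i j).1 = (ℓ i j).2 := by
  have htoRight : S.toRight = {false} := by
    ext c
    cases c <;> simp [ha, hb]
  have htoLeft : S.toLeft.card = m := by
    have := card_toLeft_add_card_toRight (u := S)
    rw [htoRight, card_singleton] at this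
    omega
  have hclauses : S.toLeft.image Prod.fst = univ :=
    eq_univ_of_card _ (by rw [card_image_of_injOn hS.injOn_clause, htoLeft, Fintype.card_fin])
  have hpick : ∀ i, ∃ j, Sum.inl (i, j) ∈ S := fun i => by
    obtain ⟨p, hp, rfl⟩ := mem_image.mp (hclauses ▸ mem_univ i)
    exact ⟨p.2, mem_toLeft.mp hp⟩
  choose j hj using hpick
  obtain ⟨τ, hτ⟩ := exists_assignment_of_consistent (fun i => ℓ i (j i))
    fun i k => hS.sign_eq_of_var_eq (hj i) (hj k)
  exact ⟨τ, fun i => ⟨j i, hτ i⟩⟩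

lemma exists_naive_of_assignment {τ : X → Bool}
    (hτ : ∀ i : Fin m, ∃ j : Fin 3, τ (ℓ i j).1 = (ℓ i j).2) :
    ∃ S : Finset (Arg m), Naive (cnfAttack ℓ) S ∧ Sum.inr false ∈ S ∧ Sum.inr true ∉ S ∧
      S.card = m + 1 := by
  choose j hj using hτ
  set L : Finset (Arg m) := univ.image fun i => Sum.inl (i, j i) with hL
  have hinj : Function.Injective fun i => (Sum.inl (i, j i) : Arg m) :=
    fun i k h => (Prod.ext_iff.mp (Sum.inl_injective h)).1
  refine ⟨insert (Sum.inr false) L, naive_of_forall_notMem ?_ ?_, mem_insert_self _ _,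
    by simp [hL], ?_⟩
  · intro x hx y hy
    simp only [hL, mem_insert, mem_image, mem_univ, true_and] at hx hy
    rcases hx with rfl | ⟨i, rfl⟩ <;> rcases hy with rfl | ⟨k, rfl⟩
    · exact not_cnfAttack_inr_self ℓ false
    · exact Bool.false_ne_true
    · exact Bool.false_ne_true
    · rintro (⟨rfl, hpos⟩ | ⟨hvar, hsign⟩)
      · exact hpos rfl
      · exact hsign (by rw [← hj i, ← hj k, hvar])
  · rintro (⟨i, c⟩ | (_ | _)) hx
    · exact ⟨Sum.inl (i, j i), by simp [hL],
        Or.inl ⟨rfl, fun hpos => hx (by simpa [hL] using hpos)⟩⟩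
    · exact absurd (mem_insert_self _ _) hx
    · exact ⟨Sum.inr false, mem_insert_self _ _, cnfAttack_inr_false_inr_true ℓ⟩
  · rw [card_insert_of_notMem (by simp [hL]), card_image_of_injective _ hinj, card_univ,
      Fintype.card_fin]

end Reduction

/-- There exist naive extensions `S, T` of the reduction AF with `a ∈ S`, `b ∈ T`
and `d(S,T) = m + 2` iff the 3-CNF `φ = C₁ ∧ ⋯ ∧ C_m` is satisfiable. -/
theorem stmt13 {X : Type*} [DecidableEq X] (m : ℕ) (ℓ : Fin m → Fin 3 → X × Bool) :
    (∃ S T : Finset (Arg m),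
        Naive (cnfAttack ℓ) S ∧ Naive (cnfAttack ℓ) T ∧
        (Sum.inr false : Arg m) ∈ S ∧ (Sum.inr true : Arg m) ∈ T ∧
        (S ∆ T).card = m + 2) ↔
    (∃ τ : X → Bool, ∀ i : Fin m, ∃ j : Fin 3, τ (ℓ i j).1 = (ℓ i j).2) := by
  constructor
  · rintro ⟨S, T, ⟨hS, -⟩, ⟨hT, -⟩, ha, hb, hcard⟩
    obtain rfl : T = {Sum.inr true} := hT.eq_singleton_of_attacks hb (cnfAttack_inr_true ℓ)
    have hbS : Sum.inr true ∉ S := fun hbS => hS _ ha _ hbS (cnfAttack_inr_false_inr_true ℓ)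
    rw [card_symmDiff_singleton hbS] at hcard
    exact exists_assignment_of_conflictFree hS ha hbS (by omega)
  · rintro ⟨τ, hτ⟩
    obtain ⟨S, hS, ha, hbS, hcard⟩ := exists_naive_of_assignment hτ
    refine ⟨S, {Sum.inr true}, hS,
      naive_singleton (not_cnfAttack_inr_self ℓ true) (cnfAttack_inr_true ℓ), ha,
      mem_singleton_self _, ?_⟩
    rw [card_symmDiff_singleton hbS, hcard]
end

section
/- Let F=(A,R) be an AF with symmetric attack relation and let F'=(A',R') be its shadow AF. For any conflict-free set L ⊆ A' in F' and any ℓ ∈ L, the set (L \ {ℓ}) ∪ {ℓ_*} is also conflict-free in F', where for ℓ ∈ A' we write ℓ_* for the shadow s_* of ℓ if ℓ = s ∈ A, and for the original argument s if ℓ = s_*. -/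
/-- The attack relation of the shadow AF of `(A, R)`: original arguments are
`Sum.inl s`, shadow arguments `s_*` are `Sum.inr s`.  The original attacks are kept,
every argument attacks (and is attacked by) its own shadow, and whenever `(s,t) ∈ R`
we additionally have the attacks between `s` and `t_*`, between `s_*` and `t_*`,
and between `s_*` and `t`. -/
def shadowAttack {α : Type*} (R : α → α → Prop) : (α ⊕ α) → (α ⊕ α) → Prop
  | Sum.inl s, Sum.inl t => R s t
  | Sum.inl s, Sum.inr t => s = t ∨ R s t
  | Sum.inr s, Sum.inl t => s = t ∨ R s t
  | Sum.inr s, Sum.inr t => R s t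

/-- The set of arguments `A' = A ∪ {s_* | s ∈ A}` of the shadow AF of `(A, R)`. -/
def shadowArgs {α : Type*} [DecidableEq α] (A : Finset α) : Finset (α ⊕ α) :=
  A.image Sum.inl ∪ A.image Sum.inr

/-- For an AF `(A, R)` with symmetric attack relation and its shadow AF:
for any conflict-free set `L ⊆ A'` of the shadow AF and any `ℓ ∈ L`, the set
`(L \ {ℓ}) ∪ {ℓ_*}` is also conflict-free in the shadow AF, where `ℓ_*` swaps
an original argument with its shadow (`Sum.swap`). -/
theorem stmt16 {α : Type*} [DecidableEq α] (A : Finset α) (R : α → α → Prop)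
    (hR : ∀ x y, R x y → x ∈ A ∧ y ∈ A)
    (hSym : ∀ x y, R x y → R y x)
    (L : Finset (α ⊕ α)) (hL : L ⊆ shadowArgs A)
    (hcf : ConflictFree (shadowAttack R) L)
    (ℓ : α ⊕ α) (hℓ : ℓ ∈ L) :
    ConflictFree (shadowAttack R) (insert ℓ.swap (L.erase ℓ)) := by

  -- key lemmas about swapping one side
  have key1 : ∀ x y : α ⊕ α, shadowAttack R x.swap y → shadowAttack R x y ∨ y = x := by
    rintro (s|s) (t|t) h <;> simp [shadowAttack, Sum.swap] at h ⊢ <;> tauto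
  have key2 : ∀ x y : α ⊕ α, shadowAttack R y x.swap → shadowAttack R y x ∨ y = x := by
    rintro (s|s) (t|t) h <;> simp [shadowAttack, Sum.swap] at h ⊢ <;> tauto
  intro x hx y hy hatt
  rcases Finset.mem_insert.mp hx with hx | hx <;>
  rcases Finset.mem_insert.mp hy with hy | hy
  · subst hx; subst hy
    have := hcf ℓ hℓ ℓ hℓ
    cases ℓ <;> simp [shadowAttack, Sum.swap] at hatt this <;> exact this hatt
  · subst hx
    rcases key1 ℓ y hatt with h | h
    · exact hcf ℓ hℓ y (Finset.mem_of_mem_erase hy) h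
    · exact (Finset.ne_of_mem_erase hy) h
  · subst hy
    rcases key2 ℓ x hatt with h | h
    · exact hcf x (Finset.mem_of_mem_erase hx) ℓ hℓ h
    · exact (Finset.ne_of_mem_erase hx) h
  · exact hcf x (Finset.mem_of_mem_erase hx) y (Finset.mem_of_mem_erase hy) hatt
end

section
/- Let φ = C₁ ∧ ⋯ ∧ C_m be a 3-CNF formula over variables X with C_i = (ℓ_{i1} ∨ ℓ_{i2} ∨ ℓ_{i3}), let F=(A,R) be the AF with A = {ℓ_{ij} | 1 ≤ i ≤ m, 1 ≤ j ≤ 3} and R consisting of the symmetric attacks {ℓ_{i1},ℓ_{i2}}, {ℓ_{i2},ℓ_{i3}}, {ℓ_{i3},ℓ_{i1}} for each i ≤ m together with the symmetric attacks {ℓ,ℓ'} between every pair of occurrences of complementary literals, and let F'=(A',R') be the shadow AF of F. Then for each σ ∈ {conflict-free, naive}: φ is satisfiable if and only if F' admits two σ-extensions S,T with d(S,T) = 2m. -/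
open scoped symmDiff

/-- Arguments of the reduction AF for a 3-CNF with `m` clauses: one argument per
literal occurrence `(i,j)` (the `j`-th literal of clause `i`). -/
abbrev LArg (m : ℕ) : Type := Fin m × Fin 3

/-- The (symmetric) attack relation of the reduction AF for a 3-CNF with `m` clauses,
whose `j`-th literal of clause `i` is `ℓ i j` (a variable together with a polarity):
a triangle of attacks between the three literal occurrences of each clause, together
with attacks between every pair of occurrences of complementary literals. -/
def litAttack {X : Type*} [DecidableEq X] {m : ℕ} (ℓ : Fin m → Fin 3 → X × Bool)
    (p q : LArg m) : Prop :=
  (p.1 = q.1 ∧ p.2 ≠ q.2) ∨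
  ((ℓ p.1 p.2).1 = (ℓ q.1 q.2).1 ∧ (ℓ p.1 p.2).2 ≠ (ℓ q.1 q.2).2)

/-!
Two arguments sharing a clause, whether as literals or as shadows, attack each
other in `F'`, so a conflict-free set of `F'` has at most `m` elements; hence `d(S,T) = 2m`
forces `|S| = m`, i.e. `S` picks one literal occurrence (or its shadow) from every clause.
These occurrences contain no complementary pair, so setting them true satisfies `φ`.
Conversely, a satisfying assignment selects one true occurrence per clause; the selection
`E` is conflict-free and attacks every other occurrence by the clause triangle, so `E` and
its set of shadows `E_*` are naive in `F'`, and they are disjoint of size `m`.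
-/

section ConflictFree

variable {α ι : Type*} {R : α → α → Prop} {S : Finset α}

theorem ConflictFree.injOn {f : α → ι} (hf : ∀ a b, a ≠ b → f a = f b → R a b)
    (hS : ConflictFree R S) : Set.InjOn f S := by
  intro a ha b hb hab
  by_contra hne
  exact hS a ha b hb (hf a b hne hab)

theorem ConflictFree.card_le [Fintype ι] {f : α → ι} (hf : ∀ a b, a ≠ b → f a = f b → R a b)
    (hS : ConflictFree R S) : S.card ≤ Fintype.card ι :=
  Finset.card_le_card_of_injOn f (fun _ _ => Finset.mem_coe.2 (Finset.mem_univ _)) (hS.injOn hf)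

theorem ConflictFree.exists_mem_of_card_eq [Fintype ι] [DecidableEq ι] {f : α → ι}
    (hf : ∀ a b, a ≠ b → f a = f b → R a b) (hS : ConflictFree R S)
    (hcard : S.card = Fintype.card ι) (i : ι) : ∃ a ∈ S, f a = i := by
  have himage : S.image f = Finset.univ := by
    apply Finset.eq_univ_of_card
    rw [Finset.card_image_of_injOn (hS.injOn hf), hcard]
  have hi : i ∈ S.image f := himage ▸ Finset.mem_univ i
  simpa using hi

theorem Naive.of_forall_not_mem (hS : ConflictFree R S) (hmax : ∀ c ∉ S, ∃ e ∈ S, R c e) :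
    Naive R S := by
  refine ⟨hS, fun S' hSS' hS' => ?_⟩
  obtain ⟨c, hcS', hcS⟩ := Finset.exists_of_ssubset hSS'
  obtain ⟨e, heS, hce⟩ := hmax c hcS
  exact hS' c hcS' e (hSS'.1 heS) hce

end ConflictFree

theorem card_eq_of_card_symmDiff_eq {α : Type*} [DecidableEq α] {S T : Finset α} {n : ℕ}
    (hS : S.card ≤ n) (hT : T.card ≤ n) (hST : (S ∆ T).card = 2 * n) : S.card = n := by
  have : (S ∆ T).card ≤ S.card + T.card :=
    (Finset.card_le_card (symmDiff_le_sup (a := S))).trans (Finset.card_union_le S T)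
  omega

section Shadow

variable {α : Type*} {R : α → α → Prop}

def unshadow : α ⊕ α → α := Sum.elim id id

theorem shadowAttack_of_unshadow {a b : α ⊕ α} (h : R (unshadow a) (unshadow b)) :
    shadowAttack R a b := by
  cases a <;> cases b <;> simp_all [shadowAttack, unshadow]

theorem shadowAttack_of_unshadow_eq {a b : α ⊕ α} (hne : a ≠ b)
    (h : unshadow a = unshadow b) : shadowAttack R a b := by
  cases a <;> cases b <;> simp_all [shadowAttack, unshadow]

theorem ConflictFree.map_inl {E : Finset α} (hE : ConflictFree R E) :
    ConflictFree (shadowAttack R) (E.map .inl) := by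
  simpa [ConflictFree, shadowAttack] using hE

theorem ConflictFree.map_inr {E : Finset α} (hE : ConflictFree R E) :
    ConflictFree (shadowAttack R) (E.map .inr) := by
  simpa [ConflictFree, shadowAttack] using hE

theorem Naive.map_inl {E : Finset α} (hE : ConflictFree R E) (hmax : ∀ c ∉ E, ∃ e ∈ E, R c e) :
    Naive (shadowAttack R) (E.map .inl) := by
  refine .of_forall_not_mem hE.map_inl ?_
  rintro (c | c) hc
  · obtain ⟨e, he, hce⟩ := hmax c (by simpa using hc)
    exact ⟨.inl e, by simpa using he, hce⟩
  · by_cases hcE : c ∈ E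
    · exact ⟨.inl c, by simpa using hcE, Or.inl rfl⟩
    · obtain ⟨e, he, hce⟩ := hmax c hcE
      exact ⟨.inl e, by simpa using he, Or.inr hce⟩

theorem Naive.map_inr {E : Finset α} (hE : ConflictFree R E) (hmax : ∀ c ∉ E, ∃ e ∈ E, R c e) :
    Naive (shadowAttack R) (E.map .inr) := by
  refine .of_forall_not_mem hE.map_inr ?_
  rintro (c | c) hc
  · by_cases hcE : c ∈ E
    · exact ⟨.inr c, by simpa using hcE, Or.inl rfl⟩
    · obtain ⟨e, he, hce⟩ := hmax c hcE
      exact ⟨.inr e, by simpa using he, Or.inr hce⟩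
  · obtain ⟨e, he, hce⟩ := hmax c (by simpa using hc)
    exact ⟨.inr e, by simpa using he, hce⟩

theorem card_symmDiff_map_inl_map_inr [DecidableEq α] (E : Finset α) :
    (E.map (.inl : α ↪ α ⊕ α) ∆ E.map .inr).card = 2 * E.card := by
  have hdisj : Disjoint (E.map (.inl : α ↪ α ⊕ α)) (E.map .inr) := by
    simp [Finset.disjoint_left]
  rw [hdisj.symmDiff_eq_sup, Finset.sup_eq_union, Finset.card_union_of_disjoint hdisj]
  simp [two_mul]

end Shadow

theorem exists_assignment_of_consistent_s17 {X : Type*} {L : Set (X × Bool)}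
    (hL : ∀ x, (x, true) ∈ L → (x, false) ∉ L) : ∃ τ : X → Bool, ∀ p ∈ L, τ p.1 = p.2 := by
  classical
  refine ⟨fun x => decide ((x, true) ∈ L), ?_⟩
  rintro ⟨x, (_ | _)⟩ hp
  · simpa using fun h => hL x h hp
  · simpa using hp

section Reduction

variable {X : Type*} [DecidableEq X] {m : ℕ} (ℓ : Fin m → Fin 3 → X × Bool)

theorem shadowAttack_litAttack_of_clause_eq {a b : LArg m ⊕ LArg m} (hne : a ≠ b)
    (h : (unshadow a).1 = (unshadow b).1) : shadowAttack (litAttack ℓ) a b := by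
  by_cases hab : unshadow a = unshadow b
  · exact shadowAttack_of_unshadow_eq hne hab
  · exact shadowAttack_of_unshadow (.inl ⟨h, fun h' => hab (Prod.ext h h')⟩)

theorem ConflictFree.card_le_numClauses {S : Finset (LArg m ⊕ LArg m)}
    (hS : ConflictFree (shadowAttack (litAttack ℓ)) S) : S.card ≤ m := by
  simpa using hS.card_le fun _ _ => shadowAttack_litAttack_of_clause_eq ℓ

theorem satisfiable_of_conflictFree {S T : Finset (LArg m ⊕ LArg m)}
    (hS : ConflictFree (shadowAttack (litAttack ℓ)) S)
    (hT : ConflictFree (shadowAttack (litAttack ℓ)) T) (hST : (S ∆ T).card = 2 * m) :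
    ∃ τ : X → Bool, ∀ i : Fin m, ∃ j : Fin 3, τ (ℓ i j).1 = (ℓ i j).2 := by
  classical
  have hcard : S.card = m :=
    card_eq_of_card_symmDiff_eq (hS.card_le_numClauses ℓ) (hT.card_le_numClauses ℓ) hST
  set lit : LArg m ⊕ LArg m → X × Bool := fun a => ℓ (unshadow a).1 (unshadow a).2
  have hconsistent : ∀ x, (x, true) ∈ lit '' S → (x, false) ∉ lit '' S := by
    rintro x ⟨a, ha, hax⟩ ⟨b, hb, hbx⟩
    refine hS a ha b hb (shadowAttack_of_unshadow (.inr ⟨?_, ?_⟩)) <;> simp_all [lit]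
  obtain ⟨τ, hτ⟩ := exists_assignment_of_consistent_s17 hconsistent
  refine ⟨τ, fun i => ?_⟩
  obtain ⟨a, ha, rfl⟩ := hS.exists_mem_of_card_eq (fun _ _ => shadowAttack_litAttack_of_clause_eq ℓ)
    (by simpa using hcard) i
  exact ⟨(unshadow a).2, hτ _ ⟨a, ha, rfl⟩⟩

theorem exists_naive_of_satisfiable {τ : X → Bool}
    (hτ : ∀ i : Fin m, ∃ j : Fin 3, τ (ℓ i j).1 = (ℓ i j).2) :
    ∃ S T : Finset (LArg m ⊕ LArg m),
      Naive (shadowAttack (litAttack ℓ)) S ∧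
      Naive (shadowAttack (litAttack ℓ)) T ∧ (S ∆ T).card = 2 * m := by
  choose j hj using hτ
  have hinj : Function.Injective fun i => ((i, j i) : LArg m) := fun _ _ h => (Prod.ext_iff.1 h).1
  set E : Finset (LArg m) := Finset.univ.map ⟨_, hinj⟩
  have hmem : ∀ c, c ∈ E ↔ c.2 = j c.1 := fun c => by
    simp [E, Prod.ext_iff, eq_comm]
  have hE : ConflictFree (litAttack ℓ) E := by
    rintro ⟨i, k⟩ hi ⟨i', k'⟩ hi'
    obtain rfl : k = j i := (hmem _).1 hi
    obtain rfl : k' = j i' := (hmem _).1 hi'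
    rintro (⟨rfl, hne⟩ | ⟨hvar, hpol⟩)
    · exact hne rfl
    · exact hpol (by rw [← hj i, ← hj i', hvar])
  have hmax : ∀ c ∉ E, ∃ e ∈ E, litAttack ℓ c e := fun c hc =>
    ⟨(c.1, j c.1), (hmem _).2 rfl, .inl ⟨rfl, fun h => hc ((hmem c).2 h)⟩⟩
  refine ⟨_, _, .map_inl hE hmax, .map_inr hE hmax, ?_⟩
  simp [card_symmDiff_map_inl_map_inr, E]

end Reduction

/-- For the shadow AF `F'` of the reduction AF of a 3-CNF `φ = C₁ ∧ ⋯ ∧ C_m`, and for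
each semantics `σ ∈ {conflict-free, naive}`:  `φ` is satisfiable iff `F'` admits two
`σ`-extensions `S, T` with `d(S,T) = 2m`. -/
theorem stmt17 {X : Type*} [DecidableEq X] (m : ℕ) (ℓ : Fin m → Fin 3 → X × Bool) :
    ((∃ τ : X → Bool, ∀ i : Fin m, ∃ j : Fin 3, τ (ℓ i j).1 = (ℓ i j).2) ↔
      (∃ S T : Finset (LArg m ⊕ LArg m),
        ConflictFree (shadowAttack (litAttack ℓ)) S ∧
        ConflictFree (shadowAttack (litAttack ℓ)) T ∧ (S ∆ T).card = 2 * m)) ∧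
    ((∃ τ : X → Bool, ∀ i : Fin m, ∃ j : Fin 3, τ (ℓ i j).1 = (ℓ i j).2) ↔
      (∃ S T : Finset (LArg m ⊕ LArg m),
        Naive (shadowAttack (litAttack ℓ)) S ∧
        Naive (shadowAttack (litAttack ℓ)) T ∧ (S ∆ T).card = 2 * m)) := by
  refine ⟨⟨fun ⟨τ, hτ⟩ => ?_, fun ⟨S, T, hS, hT, hST⟩ => satisfiable_of_conflictFree ℓ hS hT hST⟩,
    ⟨fun ⟨τ, hτ⟩ => exists_naive_of_satisfiable ℓ hτ,
      fun ⟨S, T, hS, hT, hST⟩ => satisfiable_of_conflictFree ℓ hS.1 hT.1 hST⟩⟩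
  obtain ⟨S, T, hS, hT, hST⟩ := exists_naive_of_satisfiable ℓ hτ
  exact ⟨S, T, hS.1, hT.1, hST⟩
end

section
/- Let φ = C₁ ∧ ⋯ ∧ C_m be a CNF formula over n variables, let F_φ=(A,R) be its standard translation, and let F'=(A',R') be the AF with A' = A ∪ {b} for a fresh argument b and R' = R ∪ {(φ,b)} ∪ {(b,x) | x ∈ A}. Then for each σ ∈ {admissible, complete, stable}: φ is satisfiable if and only if there exist σ-extensions S,T of F' with the argument φ ∈ S, b ∈ T and d(S,T) = n+2. -/
open scoped symmDiff

/-- A set is complete (w.r.t. an AF whose set of arguments is the whole type) if it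
is admissible and contains every argument it defends. -/
def Complete {α : Type*} (R : α → α → Prop) (S : Finset α) : Prop :=
  Admissible R S ∧ ∀ x, Defended R S x → x ∈ S

/-- A set is stable (w.r.t. an AF whose set of arguments is the whole type) if it is
conflict-free and attacks every argument outside of it. -/
def Stable {α : Type*} (R : α → α → Prop) (S : Finset α) : Prop :=
  ConflictFree R S ∧ ∀ x, x ∉ S → ∃ s ∈ S, R s x

/-- Arguments of the standard translation of a CNF with `m` clauses over `n`
variables: the argument `φ` (`Sum.inl ()`), one argument per clause
(`Sum.inr (Sum.inl i)`), and one argument per literal `x`/`x̄`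
(`Sum.inr (Sum.inr (x, polarity))`). -/
abbrev SArg (m n : ℕ) : Type := Unit ⊕ Fin m ⊕ (Fin n × Bool)

/-- The attack relation of the standard translation of the CNF whose `i`-th clause is
the set `C i` of literals: every clause attacks `φ`, complementary literals attack
each other, and every literal attacks the clauses in which it occurs. -/
def stdAttack {m n : ℕ} (C : Fin m → Finset (Fin n × Bool)) :
    SArg m n → SArg m n → Prop
  | Sum.inr (Sum.inl _), Sum.inl _ => True
  | Sum.inr (Sum.inr p), Sum.inr (Sum.inl i) => p ∈ C i
  | Sum.inr (Sum.inr p), Sum.inr (Sum.inr q) => p.1 = q.1 ∧ p.2 ≠ q.2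
  | _, _ => False

/-- The attack relation of the extended AF `F' = (A ∪ {b}, R ∪ {(φ,b)} ∪ {(b,x) | x ∈ A})`
obtained from the standard translation by adding a fresh argument `b = Sum.inr ()`. -/
def stdAttack' {m n : ℕ} (C : Fin m → Finset (Fin n × Bool)) :
    (SArg m n ⊕ Unit) → (SArg m n ⊕ Unit) → Prop
  | Sum.inl x, Sum.inl y => stdAttack C x y
  | Sum.inl x, Sum.inr _ => x = Sum.inl ()
  | Sum.inr _, Sum.inl _ => True
  | Sum.inr _, Sum.inr _ => False

lemma my_stable_admissible {α : Type*} {R : α → α → Prop} {S : Finset α}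
    (h : Stable R S) : Admissible R S := by
  refine ⟨h.1, fun x hx y hyx => ?_⟩
  by_cases hy : y ∈ S
  · exact absurd hyx (h.1 y hy x hx)
  · exact h.2 y hy

lemma my_stable_complete {α : Type*} {R : α → α → Prop} {S : Finset α}
    (h : Stable R S) : Complete R S := by
  refine ⟨my_stable_admissible h, fun x hx => ?_⟩
  by_contra hxS
  obtain ⟨s, hs, hsx⟩ := h.2 x hxS
  obtain ⟨z, hz, hzs⟩ := hx s hsx
  exact h.1 z hz s hs hzs

lemma my_forward {m n : ℕ} (C : Fin m → Finset (Fin n × Bool))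
    (τ : Fin n → Bool) (hτ : ∀ i : Fin m, ∃ p ∈ C i, τ p.1 = p.2) :
    ∃ S T : Finset (SArg m n ⊕ Unit),
      Stable (stdAttack' C) S ∧ Stable (stdAttack' C) T ∧
      (Sum.inl (Sum.inl ()) : SArg m n ⊕ Unit) ∈ S ∧
      (Sum.inr () : SArg m n ⊕ Unit) ∈ T ∧ (S ∆ T).card = n + 2 := by
  classical
  set S : Finset (SArg m n ⊕ Unit) :=
    insert (Sum.inl (Sum.inl ()))
      ((Finset.univ : Finset (Fin n)).image fun x => Sum.inl (Sum.inr (Sum.inr (x, τ x))))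
    with hSdef
  have hmem : ∀ y : SArg m n ⊕ Unit,
      y ∈ S ↔ y = Sum.inl (Sum.inl ()) ∨ ∃ x : Fin n, y = Sum.inl (Sum.inr (Sum.inr (x, τ x))) := by
    intro y
    simp [hSdef, eq_comm]
  have hbS : (Sum.inr () : SArg m n ⊕ Unit) ∉ S := by
    rw [hmem]; rintro (h | ⟨x, h⟩) <;> simp_all
  have hcf : ConflictFree (stdAttack' C) S := by
    intro x hx y hy
    rw [hmem] at hx hy
    rcases hx with rfl | ⟨a, rfl⟩ <;> rcases hy with rfl | ⟨b, rfl⟩ <;>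
      simp [stdAttack', stdAttack]
    rintro rfl; rfl
  have hstabS : Stable (stdAttack' C) S := by
    refine ⟨hcf, fun x hx => ?_⟩
    rcases x with (⟨⟩ | i | ⟨v, bb⟩) | ⟨⟩
    · exact absurd ((hmem _).2 (Or.inl rfl)) hx
    · obtain ⟨p, hp, hpτ⟩ := hτ i
      refine ⟨Sum.inl (Sum.inr (Sum.inr p)), (hmem _).2 (Or.inr ⟨p.1, by rw [hpτ]⟩), ?_⟩
      simpa [stdAttack', stdAttack] using hp
    · have hbb : bb ≠ τ v := by
        rintro rfl; exact hx ((hmem _).2 (Or.inr ⟨v, rfl⟩))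
      exact ⟨Sum.inl (Sum.inr (Sum.inr (v, τ v))), (hmem _).2 (Or.inr ⟨v, rfl⟩),
        by simp [stdAttack', stdAttack]; exact fun h => hbb h.symm⟩
    · exact ⟨Sum.inl (Sum.inl ()), (hmem _).2 (Or.inl rfl), by simp [stdAttack']⟩
  have hstabT : Stable (stdAttack' C) ({Sum.inr ()} : Finset (SArg m n ⊕ Unit)) := by
    constructor
    · intro x hx y hy
      simp only [Finset.mem_singleton] at hx hy
      subst hx; subst hy; simp [stdAttack']
    · intro x hx
      rcases x with a | ⟨⟩
      · exact ⟨Sum.inr (), Finset.mem_singleton_self _, by simp [stdAttack']⟩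
      · simp at hx
  have hdisj : Disjoint S ({Sum.inr ()} : Finset (SArg m n ⊕ Unit)) := by
    simp [Finset.disjoint_singleton_right, hbS]
  have hcardS : S.card = n + 1 := by
    rw [hSdef, Finset.card_insert_of_notMem (by simp), Finset.card_image_of_injective _
      (fun a b h => by
        simp only [Sum.inl.injEq, Sum.inr.injEq, Prod.mk.injEq] at h; exact h.1)]
    simp [Nat.add_comm]
  refine ⟨S, {Sum.inr ()}, hstabS, hstabT, (hmem _).2 (Or.inl rfl),
    Finset.mem_singleton_self _, ?_⟩
  rw [hdisj.symmDiff_eq_sup]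
  rw [Finset.sup_eq_union, Finset.card_union_of_disjoint hdisj, hcardS,
    Finset.card_singleton]

lemma my_backward {m n : ℕ} (C : Fin m → Finset (Fin n × Bool))
    (S T : Finset (SArg m n ⊕ Unit))
    (hS : Admissible (stdAttack' C) S) (hT : Admissible (stdAttack' C) T)
    (hφ : (Sum.inl (Sum.inl ()) : SArg m n ⊕ Unit) ∈ S)
    (hb : (Sum.inr () : SArg m n ⊕ Unit) ∈ T)
    (hcard : (S ∆ T).card = n + 2) :
    ∃ τ : Fin n → Bool, ∀ i : Fin m, ∃ p ∈ C i, τ p.1 = p.2 := by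
  classical
  -- T = {b}
  have hTeq : T = {Sum.inr ()} := by
    apply Finset.eq_singleton_iff_unique_mem.2
    refine ⟨hb, fun x hx => ?_⟩
    rcases x with a | ⟨⟩
    · exact absurd (by simp [stdAttack'] : stdAttack' C (Sum.inr ()) (Sum.inl a))
        (hT.1 _ hb _ hx)
    · rfl
  have hbS : (Sum.inr () : SArg m n ⊕ Unit) ∉ S := fun h =>
    hS.1 _ hφ _ h (by simp [stdAttack'])
  have hclS : ∀ i : Fin m, (Sum.inl (Sum.inr (Sum.inl i)) : SArg m n ⊕ Unit) ∉ S := by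
    intro i h
    exact hS.1 _ h _ hφ (by simp [stdAttack', stdAttack])
  -- structure of S
  set L : Finset (Fin n × Bool) :=
    Finset.univ.filter (fun p => (Sum.inl (Sum.inr (Sum.inr p)) : SArg m n ⊕ Unit) ∈ S)
    with hLdef
  have hSstruct : S = insert (Sum.inl (Sum.inl ()))
      (L.image fun p => (Sum.inl (Sum.inr (Sum.inr p)) : SArg m n ⊕ Unit)) := by
    apply Finset.ext
    intro y
    simp only [Finset.mem_insert, Finset.mem_image, hLdef, Finset.mem_filter,
      Finset.mem_univ, true_and]
    constructor
    · intro hy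
      rcases y with (⟨⟩ | i | p) | ⟨⟩
      · exact Or.inl rfl
      · exact absurd hy (hclS i)
      · exact Or.inr ⟨p, hy, rfl⟩
      · exact absurd hy hbS
    · rintro (rfl | ⟨p, hp, rfl⟩)
      · exact hφ
      · exact hp
  -- card of S
  have hdisj : Disjoint S T := by
    rw [hTeq]; simp [Finset.disjoint_singleton_right, hbS]
  have hcardS : S.card = n + 1 := by
    rw [hdisj.symmDiff_eq_sup, Finset.sup_eq_union,
      Finset.card_union_of_disjoint hdisj, hTeq, Finset.card_singleton] at hcard
    omega
  have hinj : (fun p : Fin n × Bool => (Sum.inl (Sum.inr (Sum.inr p)) : SArg m n ⊕ Unit)).Injective :=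
    fun a b h => by simpa using h
  have hcardL : L.card = n := by
    have := hcardS
    rw [hSstruct, Finset.card_insert_of_notMem (by simp),
      Finset.card_image_of_injective _ hinj] at this
    omega
  -- consistency: at most one polarity per variable
  have hcons : ∀ p ∈ L, ∀ q ∈ L, p.1 = q.1 → p = q := by
    intro p hp q hq hpq
    by_contra hne
    have h2 : p.2 ≠ q.2 := by
      intro h; exact hne (Prod.ext hpq h)
    simp only [hLdef, Finset.mem_filter] at hp hq
    exact hS.1 _ hp.2 _ hq.2 (by simp [stdAttack', stdAttack, hpq, h2])
  -- surjectivity of fst on L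
  have hfst : ∀ x : Fin n, ∃ p ∈ L, p.1 = x := by
    have himg : (L.image Prod.fst) = Finset.univ := by
      apply Finset.eq_univ_of_card
      rw [Finset.card_image_of_injOn (fun p hp q hq h => hcons p hp q hq h), hcardL]
      simp
    intro x
    have hx : x ∈ L.image Prod.fst := himg.symm ▸ Finset.mem_univ x
    obtain ⟨p, hp, hpx⟩ := Finset.mem_image.1 hx
    exact ⟨p, hp, hpx⟩
  set τ : Fin n → Bool := fun x =>
    decide ((Sum.inl (Sum.inr (Sum.inr (x, true))) : SArg m n ⊕ Unit) ∈ S) with hτdef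
  have hτS : ∀ x : Fin n, (Sum.inl (Sum.inr (Sum.inr (x, τ x))) : SArg m n ⊕ Unit) ∈ S := by
    intro x
    obtain ⟨p, hp, hp1⟩ := hfst x
    have hpS : (Sum.inl (Sum.inr (Sum.inr p)) : SArg m n ⊕ Unit) ∈ S := by
      simpa [hLdef] using (Finset.mem_filter.1 hp).2
    have hpx : p = (x, p.2) := Prod.ext hp1 rfl
    cases hb2 : p.2 with
    | true =>
      have : τ x = true := by
        simp [hτdef, decide_eq_true_iff]
        rw [hpx, hb2] at hpS; exact hpS
      rw [this, ← hb2, ← hpx]; exact hpS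
    | false =>
      have hnt : (Sum.inl (Sum.inr (Sum.inr (x, true))) : SArg m n ⊕ Unit) ∉ S := by
        intro h
        rw [hpx, hb2] at hpS
        exact hS.1 _ h _ hpS (by simp [stdAttack', stdAttack])
      have : τ x = false := by simp [hτdef, hnt]
      rw [this, ← hb2, ← hpx]; exact hpS
  refine ⟨τ, fun i => ?_⟩
  obtain ⟨z, hz, hzR⟩ := hS.2 _ hφ (Sum.inl (Sum.inr (Sum.inl i)))
    (by simp [stdAttack', stdAttack])
  rcases z with (⟨⟩ | j | p) | ⟨⟩
  · simp [stdAttack', stdAttack] at hzR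
  · simp [stdAttack', stdAttack] at hzR
  · have hpC : p ∈ C i := by simpa [stdAttack', stdAttack] using hzR
    refine ⟨p, hpC, ?_⟩
    by_contra hne
    exact hS.1 _ (hτS p.1) _ hz (by simp [stdAttack', stdAttack]; exact fun h => hne h)
  · exact absurd hz hbS

/-- For the extension `F'` of the standard translation of a CNF `φ` over `n` variables
by a fresh argument `b`, and for each `σ ∈ {admissible, complete, stable}`:
`φ` is satisfiable iff there are `σ`-extensions `S, T` of `F'` with the argument
`φ ∈ S`, `b ∈ T` and `d(S,T) = n + 2`. -/
theorem stmt19 (m n : ℕ) (C : Fin m → Finset (Fin n × Bool)) :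
    ((∃ τ : Fin n → Bool, ∀ i : Fin m, ∃ p ∈ C i, τ p.1 = p.2) ↔
      (∃ S T : Finset (SArg m n ⊕ Unit),
        Admissible (stdAttack' C) S ∧ Admissible (stdAttack' C) T ∧
        (Sum.inl (Sum.inl ()) : SArg m n ⊕ Unit) ∈ S ∧
        (Sum.inr () : SArg m n ⊕ Unit) ∈ T ∧ (S ∆ T).card = n + 2)) ∧
    ((∃ τ : Fin n → Bool, ∀ i : Fin m, ∃ p ∈ C i, τ p.1 = p.2) ↔
      (∃ S T : Finset (SArg m n ⊕ Unit),
        Complete (stdAttack' C) S ∧ Complete (stdAttack' C) T ∧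
        (Sum.inl (Sum.inl ()) : SArg m n ⊕ Unit) ∈ S ∧
        (Sum.inr () : SArg m n ⊕ Unit) ∈ T ∧ (S ∆ T).card = n + 2)) ∧
    ((∃ τ : Fin n → Bool, ∀ i : Fin m, ∃ p ∈ C i, τ p.1 = p.2) ↔
      (∃ S T : Finset (SArg m n ⊕ Unit),
        Stable (stdAttack' C) S ∧ Stable (stdAttack' C) T ∧
        (Sum.inl (Sum.inl ()) : SArg m n ⊕ Unit) ∈ S ∧
        (Sum.inr () : SArg m n ⊕ Unit) ∈ T ∧ (S ∆ T).card = n + 2)) := by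
  refine ⟨⟨fun ⟨τ, hτ⟩ => ?_, fun ⟨S, T, hS, hT, h1, h2, h3⟩ =>
      my_backward C S T hS hT h1 h2 h3⟩,
    ⟨fun ⟨τ, hτ⟩ => ?_, fun ⟨S, T, hS, hT, h1, h2, h3⟩ =>
      my_backward C S T hS.1 hT.1 h1 h2 h3⟩,
    ⟨fun ⟨τ, hτ⟩ => ?_, fun ⟨S, T, hS, hT, h1, h2, h3⟩ =>
      my_backward C S T (my_stable_admissible hS) (my_stable_admissible hT) h1 h2 h3⟩⟩ <;>
  · obtain ⟨S, T, hS, hT, h1, h2, h3⟩ := my_forward C τ hτ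
    exact ⟨S, T, by first
      | exact ⟨my_stable_admissible hS, my_stable_admissible hT, h1, h2, h3⟩
      | exact ⟨my_stable_complete hS, my_stable_complete hT, h1, h2, h3⟩
      | exact ⟨hS, hT, h1, h2, h3⟩⟩
end
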